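/- Let μ be a Borel probability measure on ℝ and Λ ⊂ ℝ a countable set. Then the exponentials {e^{2πi λx} : λ ∈ Λ} form an orthonormal basis of L²(μ) if and only if ∑_{λ∈Λ} |μ̂(ξ+λ)|² = 1 for all ξ ∈ ℝ, where μ̂(ξ) = ∫ e^{−2πi ξx} dμ(x). -/

import Mathlib

open MeasureTheory

/-- The Fourier transform of a measure: `μ̂(ξ) = ∫ e^{-2πi ξ x} dμ(x)`. -/
noncomputable def fourierT (μ : Measure ℝ) (ξ : ℝ) : ℂ :=
  ∫ x, Complex.exp ((-(2 * Real.pi * ξ * x) : ℝ) * Complex.I) ∂μ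

/-- The exponential function `x ↦ e^{2πi l x}`. -/
noncomputable def expFn (l : ℝ) : ℝ → ℂ :=
  fun x => Complex.exp (((2 * Real.pi * l * x : ℝ) : ℂ) * Complex.I)

lemma expFn_memLp (μ : Measure ℝ) [IsProbabilityMeasure μ] (l : ℝ) :
    MemLp (expFn l) 2 μ := by
  refine MemLp.mono_exponent (q := ⊤) ?_ le_top
  refine memLp_top_of_bound ?_ 1 ?_
  · exact Continuous.aestronglyMeasurable (by
      unfold expFn
      fun_prop)
  · filter_upwards with x
    have h1 : ‖expFn l x‖ = 1 := by
      rw [expFn, Complex.norm_exp]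
      simp [Complex.mul_re]
    simp [h1]

/-- The exponential `e^{2πi l x}` as an element of `L²(μ)`. -/
noncomputable def expLp (μ : Measure ℝ) [IsProbabilityMeasure μ] (l : ℝ) : Lp ℂ 2 μ :=
  (expFn_memLp μ l).toLp (expFn l)

open ComplexInnerProductSpace

lemma inner_expLp (μ : Measure ℝ) [IsProbabilityMeasure μ] (a b : ℝ) :
    ⟪expLp μ a, expLp μ b⟫ = fourierT μ (a - b) := by
  rw [MeasureTheory.L2.inner_def, fourierT]
  rw [integral_congr_ae (g := fun x => Complex.exp ((-(2 * Real.pi * (a-b) * x) : ℝ) * Complex.I))]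
  filter_upwards [(expFn_memLp μ a).coeFn_toLp, (expFn_memLp μ b).coeFn_toLp] with x hx hy
  rw [expLp, expLp] at *
  rw [hx, hy, RCLike.inner_apply, expFn, expFn, ← Complex.exp_conj, ← Complex.exp_add]
  congr 1
  simp only [map_mul, Complex.conj_ofReal, Complex.conj_I]
  push_cast
  ring

lemma fourierT_zero (μ : Measure ℝ) [IsProbabilityMeasure μ] : fourierT μ 0 = 1 := by
  rw [fourierT]
  simp

lemma norm_expLp (μ : Measure ℝ) [IsProbabilityMeasure μ] (l : ℝ) : ‖expLp μ l‖ = 1 := by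
  have h : ⟪expLp μ l, expLp μ l⟫ = 1 := by
    rw [inner_expLp, sub_self, fourierT_zero]
  have := @inner_self_eq_norm_sq_to_K ℂ _ _ _ _ (expLp μ l)
  rw [h] at this
  have h2 : (‖expLp μ l‖ : ℂ) ^ 2 = 1 := this.symm
  have h3 : (‖expLp μ l‖ : ℝ) ^ 2 = 1 := by exact_mod_cast h2
  nlinarith [norm_nonneg (expLp μ l)]

lemma mem_closure_span_of_bessel_eq {ι : Type*} {E : Type*} [NormedAddCommGroup E]
    [InnerProductSpace ℂ E] [CompleteSpace E] {v : ι → E} (hv : Orthonormal ℂ v) (x : E)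
    (h : ‖x‖ ^ 2 ≤ ∑' i, ‖⟪v i, x⟫‖ ^ 2) :
    x ∈ (Submodule.span ℂ (Set.range v)).topologicalClosure := by
  set K := (Submodule.span ℂ (Set.range v)).topologicalClosure with hK
  haveI : CompleteSpace K := (Submodule.isClosed_topologicalClosure _).completeSpace_coe
  set w : E := (K.orthogonalProjectionOnto x : E) with hw
  have hmemv : ∀ i, v i ∈ K := fun i =>
    Submodule.le_topologicalClosure _ (Submodule.subset_span ⟨i, rfl⟩)
  have hinner : ∀ i, ⟪v i, x⟫ = ⟪v i, w⟫ := by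
    intro i
    have h0 : ⟪v i, x - w⟫ = 0 :=
      Submodule.inner_right_of_mem_orthogonal (hmemv i)
        (Submodule.sub_starProjection_mem_orthogonal (K := K) x)
    rw [inner_sub_right, sub_eq_zero] at h0
    exact h0
  have hbessel : ∑' i, ‖⟪v i, (w : E)⟫‖ ^ 2 ≤ ‖(w : E)‖ ^ 2 := hv.tsum_inner_products_le (w : E)
  simp_rw [hinner] at h
  have hx2 : ‖x‖ ^ 2 ≤ ‖(w : E)‖ ^ 2 := le_trans h hbessel
  have hpyth := Submodule.norm_sq_eq_add_norm_sq_projection x K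
  have hnw : ‖K.orthogonalProjectionOnto x‖ = ‖w‖ := rfl
  have hz : ‖(Kᗮ.orthogonalProjectionOnto x : E)‖ ^ 2 ≤ 0 := by
    have : ‖Kᗮ.orthogonalProjectionOnto x‖ = ‖(Kᗮ.orthogonalProjectionOnto x : E)‖ := rfl
    rw [hnw, this] at hpyth; linarith
  have hz0 : (Kᗮ.orthogonalProjectionOnto x : E) = 0 := by
    have := sq_nonneg ‖(Kᗮ.orthogonalProjectionOnto x : E)‖
    have hn0 : ‖(Kᗮ.orthogonalProjectionOnto x : E)‖ = 0 := by nlinarith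
    exact norm_eq_zero.mp hn0
  have hsum : (K.orthogonalProjectionOnto x : E) + (Kᗮ.orthogonalProjectionOnto x : E) = x :=
    K.starProjection_add_starProjection_orthogonal x
  rw [hz0, add_zero] at hsum
  rw [← hsum]
  exact (K.orthogonalProjectionOnto x).2

lemma contAddCircle_memLp (μ : Measure ℝ) [IsProbabilityMeasure μ] {T : ℝ} [hT : Fact (0 < T)]
    (Q : C(AddCircle T, ℂ)) : MemLp (fun x : ℝ => Q (x : AddCircle T)) 2 μ := by
  refine MemLp.mono_exponent (q := ⊤) ?_ le_top
  refine memLp_top_of_bound ?_ ‖Q‖ ?_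
  · exact (Q.continuous.comp (AddCircle.continuous_mk' T)).aestronglyMeasurable
  · filter_upwards with x using Q.norm_coe_le_norm _

lemma toLp_comp_mem_span (μ : Measure ℝ) [IsProbabilityMeasure μ] {T : ℝ} [hT : Fact (0 < T)]
    {Q : C(AddCircle T, ℂ)} (hQ : Q ∈ Submodule.span ℂ (Set.range (@fourier T))) :
    (contAddCircle_memLp μ Q).toLp _ ∈
      Submodule.span ℂ (Set.range fun η : ℝ => expLp μ η) := by
  induction hQ using Submodule.span_induction with
  | mem Q hQ =>
    obtain ⟨n, rfl⟩ := hQ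
    apply Submodule.subset_span
    refine ⟨(n : ℝ) / T, ?_⟩
    unfold expLp
    rw [MemLp.toLp_eq_toLp_iff]
    filter_upwards with x
    simp only [expFn, fourier_coe_apply]
    congr 1
    push_cast
    ring
  | zero =>
    have h0 : (contAddCircle_memLp μ (0 : C(AddCircle T, ℂ))).toLp _ =
        (MemLp.zero : MemLp (0 : ℝ → ℂ) 2 μ).toLp 0 := by
      rw [MemLp.toLp_eq_toLp_iff]
      filter_upwards with x
      simp
    rw [h0, MemLp.toLp_zero]
    exact zero_mem _
  | add f g hf hg ihf ihg =>
    have : (contAddCircle_memLp μ (f + g)).toLp _ =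
        (contAddCircle_memLp μ f).toLp _ + (contAddCircle_memLp μ g).toLp _ := by
      rw [← MemLp.toLp_add, MemLp.toLp_eq_toLp_iff]
      filter_upwards with x
      simp
    rw [this]; exact add_mem ihf ihg
  | smul c f hf ih =>
    have : (contAddCircle_memLp μ (c • f)).toLp _ =
        c • (contAddCircle_memLp μ f).toLp _ := by
      rw [← MemLp.toLp_const_smul, MemLp.toLp_eq_toLp_iff]
      filter_upwards with x
      simp
    rw [this]; exact Submodule.smul_mem _ c ih


open scoped ENNReal in
lemma dense_span_expLp (μ : Measure ℝ) [IsProbabilityMeasure μ] :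
    (Submodule.span ℂ (Set.range fun η : ℝ => expLp μ η)).topologicalClosure = ⊤ := by
  set S := Submodule.span ℂ (Set.range fun η : ℝ => expLp μ η) with hS
  rw [eq_top_iff]
  rintro f -
  have hf : f ∈ closure (S : Set (Lp ℂ 2 μ)) := by
    rw [Metric.mem_closure_iff]
    intro ε hε
    -- Step 1: approximate by a continuous compactly supported function
    obtain ⟨g, g_supp, hfg, g_cont, g_mem⟩ :=
      (Lp.memLp f).exists_hasCompactSupport_eLpNorm_sub_le (p := 2) (by norm_num)
        (ε := ENNReal.ofReal (ε/4)) (by simp only [Ne, ENNReal.ofReal_eq_zero, not_le]; positivity)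
    obtain ⟨C, hC⟩ := g_supp.exists_bound_of_continuous g_cont
    set C' : ℝ := max C 0 with hC'def
    have hC' : ∀ x, ‖g x‖ ≤ C' := fun x => (hC x).trans (le_max_left _ _)
    have hC'0 : (0:ℝ) ≤ C' := le_max_right _ _
    -- Step 2: tightness constants
    obtain ⟨M, hM⟩ := g_supp.isBounded.subset_closedBall 0
    set c : ℝ≥0∞ := ENNReal.ofReal (2*C' + ε/8) with hc
    have hcpos : c ≠ 0 := by
      simp only [hc, Ne, ENNReal.ofReal_eq_zero, not_le]; positivity
    have hctop : c ≠ ⊤ := ENNReal.ofReal_ne_top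
    set d : ℝ≥0∞ := ENNReal.ofReal (ε/8) / c with hd
    set η : ℝ≥0∞ := d ^ (2:ℝ) with hη
    have hdtop : d ≠ ⊤ := (ENNReal.div_lt_top ENNReal.ofReal_ne_top hcpos).ne
    have hdpos : d ≠ 0 := by
      simp only [hd]
      refine (ENNReal.div_pos ?_ hctop).ne'
      simp only [Ne, ENNReal.ofReal_eq_zero, not_le]; positivity
    have hηpos : η ≠ 0 := by
      simp only [hη]
      simp [ENNReal.rpow_eq_zero_iff, hdpos, hdtop]
    obtain ⟨K, -, hK_comp, hμK⟩ := (MeasurableSet.univ (α := ℝ)).exists_isCompact_lt_add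
      (measure_ne_top μ _) hηpos
    obtain ⟨M₂, hM₂⟩ := hK_comp.isBounded.subset_closedBall 0
    have hKc : μ Kᶜ ≤ η := by
      rw [measure_compl hK_comp.measurableSet (measure_ne_top μ _), tsub_le_iff_right]
      exact le_of_lt (by rwa [add_comm] at hμK)
    -- the period
    set R : ℝ := max (max M M₂) 0 + 1 with hRdef
    have hRM : M < R := lt_of_le_of_lt (le_trans (le_max_left _ _) (le_max_left _ _))
      (lt_add_one _)
    have hRM₂ : M₂ < R := lt_of_le_of_lt (le_trans (le_max_right _ _) (le_max_left _ _))
      (lt_add_one _)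
    have hR0 : (0:ℝ) < R := lt_of_le_of_lt (le_max_right _ _) (lt_add_one _)
    set T : ℝ := 2 * R with hTdef
    haveI : Fact (0 < T) := ⟨by positivity⟩
    have hRT : -R + T = R := by rw [hTdef]; ring
    -- the support is inside Ioo (-R) R
    have hsupp : ∀ x : ℝ, x ∉ Set.Ioo (-R) R → g x = 0 := by
      intro x hx
      apply image_eq_zero_of_notMem_tsupport
      intro hmem
      apply hx
      have := hM hmem
      rw [Real.closedBall_eq_Icc, zero_sub, zero_add] at this
      exact ⟨lt_of_lt_of_le (neg_lt_neg hRM) this.1, lt_of_le_of_lt this.2 hRM⟩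
    -- Step 3: periodic continuous function and uniform trig approximation
    have hgRR : g (-R) = g (-R + T) := by
      rw [hRT, hsupp (-R) (by simp), hsupp R (by simp)]
    set F : AddCircle T → ℂ := AddCircle.liftIco T (-R) g with hF
    have hF_cont : Continuous F := AddCircle.liftIco_continuous hgRR g_cont.continuousOn
    set Fc : C(AddCircle T, ℂ) := ⟨F, hF_cont⟩ with hFc
    have hFbound : ∀ z : AddCircle T, ‖Fc z‖ ≤ C' := by
      intro z
      show ‖F z‖ ≤ C'
      rw [hF, AddCircle.liftIco]
      exact hC' _
    have hFc_mem : Fc ∈ closure ((Submodule.span ℂ (Set.range (@fourier T)) :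
        Submodule ℂ C(AddCircle T, ℂ)) : Set C(AddCircle T, ℂ)) := by
      have h1 : Fc ∈ (Submodule.span ℂ (Set.range (@fourier T))).topologicalClosure := by
        rw [span_fourier_closure_eq_top]; trivial
      rwa [← Submodule.topologicalClosure_coe]
    rw [Metric.mem_closure_iff] at hFc_mem
    obtain ⟨Q, hQ_mem, hQ_close⟩ := hFc_mem (ε/8) (by positivity)
    -- Step 4: estimates
    set P : ℝ → ℂ := fun x => Q (x : AddCircle T) with hP
    have hP_cont : Continuous P := Q.continuous.comp (AddCircle.continuous_mk' T)
    have hPF : ∀ x : ℝ, ‖Fc (x : AddCircle T) - P x‖ ≤ ε/8 := by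
      intro x
      have := ContinuousMap.dist_apply_le_dist (f := Fc) (g := Q) ((x : ℝ) : AddCircle T)
      rw [dist_eq_norm] at this
      exact this.trans hQ_close.le
    have hPbound : ∀ x : ℝ, ‖P x‖ ≤ C' + ε/8 := by
      intro x
      have h1 := hPF x
      have h2 := hFbound ((x : ℝ) : AddCircle T)
      calc ‖P x‖ = ‖Fc ((x:ℝ) : AddCircle T) - (Fc ((x:ℝ) : AddCircle T) - P x)‖ := by
            congr 1; ring
        _ ≤ ‖Fc ((x:ℝ) : AddCircle T)‖ + ‖Fc ((x:ℝ) : AddCircle T) - P x‖ := norm_sub_le _ _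
        _ ≤ C' + ε/8 := add_le_add h2 h1
    have hinterior : ∀ x ∈ Set.Ico (-R) R, ‖g x - P x‖ ≤ ε/8 := by
      intro x hx
      have : F ((x:ℝ) : AddCircle T) = g x :=
        AddCircle.liftIco_coe_apply (by rwa [hRT])
      calc ‖g x - P x‖ = ‖Fc ((x:ℝ) : AddCircle T) - P x‖ := by rw [show Fc _ = F _ from rfl, this]
        _ ≤ ε/8 := hPF x
    have hglobal : ∀ x : ℝ, ‖g x - P x‖ ≤ 2*C' + ε/8 := by
      intro x
      calc ‖g x - P x‖ ≤ ‖g x‖ + ‖P x‖ := norm_sub_le _ _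
        _ ≤ C' + (C' + ε/8) := add_le_add (hC' x) (hPbound x)
        _ = 2*C' + ε/8 := by ring
    -- Step 5: L² estimate for g - P
    set A : Set ℝ := Set.Ico (-R) R with hA
    have hA_meas : MeasurableSet A := measurableSet_Ico
    have hgP_meas : AEStronglyMeasurable (g - P) μ :=
      (g_cont.sub hP_cont).aestronglyMeasurable
    have hsplit : eLpNorm (g - P) 2 μ ≤
        eLpNorm (A.indicator (g - P)) 2 μ + eLpNorm (Aᶜ.indicator (g - P)) 2 μ := by
      conv_lhs => rw [← Set.indicator_self_add_compl A (g - P)]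
      exact eLpNorm_add_le (hgP_meas.indicator hA_meas)
        (hgP_meas.indicator hA_meas.compl) (by norm_num)
    have hint : eLpNorm (A.indicator (g - P)) 2 μ ≤ ENNReal.ofReal (ε/8) := by
      rw [eLpNorm_indicator_eq_eLpNorm_restrict hA_meas]
      calc eLpNorm (g - P) 2 (μ.restrict A)
          ≤ (μ.restrict A) Set.univ ^ (2:ℝ≥0∞).toReal⁻¹ * ENNReal.ofReal (ε/8) := by
            apply eLpNorm_le_of_ae_bound
            rw [ae_restrict_iff' hA_meas]
            filter_upwards with x hx
            exact hinterior x hx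
        _ ≤ 1 * ENNReal.ofReal (ε/8) := by
            apply mul_le_mul_left
            apply ENNReal.rpow_le_one ?_ (by norm_num)
            rw [Measure.restrict_apply_univ]
            exact prob_le_one
        _ = ENNReal.ofReal (ε/8) := one_mul _
    have hext : eLpNorm (Aᶜ.indicator (g - P)) 2 μ ≤ ENNReal.ofReal (ε/8) := by
      rw [eLpNorm_indicator_eq_eLpNorm_restrict hA_meas.compl]
      have hμAc : μ Aᶜ ≤ η := by
        refine le_trans (measure_mono ?_) hKc
        apply Set.compl_subset_compl.2
        intro x hxK
        have := hM₂ hxK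
        rw [Real.closedBall_eq_Icc, zero_sub, zero_add] at this
        exact ⟨le_trans (neg_le_neg hRM₂.le) this.1, lt_of_le_of_lt this.2 hRM₂⟩
      calc eLpNorm (g - P) 2 (μ.restrict Aᶜ)
          ≤ (μ.restrict Aᶜ) Set.univ ^ (2:ℝ≥0∞).toReal⁻¹ * c := by
            apply eLpNorm_le_of_ae_bound
            filter_upwards with x using hglobal x
        _ ≤ η ^ (2:ℝ)⁻¹ * c := by
            apply mul_le_mul_left
            apply ENNReal.rpow_le_rpow ?_ (by norm_num)
            rw [Measure.restrict_apply_univ]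
            exact hμAc
        _ = d * c := by
            rw [hη, ← ENNReal.rpow_mul]
            norm_num
        _ = ENNReal.ofReal (ε/8) := by
            rw [hd, ENNReal.div_mul_cancel hcpos hctop]
    -- Step 6: assemble
    have hP_mem : MemLp P 2 μ := contAddCircle_memLp μ Q
    refine ⟨hP_mem.toLp P, toLp_comp_mem_span μ hQ_mem, ?_⟩
    rw [Lp.dist_def]
    have hcongr : eLpNorm (⇑f - ⇑(hP_mem.toLp P)) 2 μ = eLpNorm (⇑f - P) 2 μ := by
      apply eLpNorm_congr_ae
      filter_upwards [hP_mem.coeFn_toLp] with x hx2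
      simp [hx2]
    have htotal : eLpNorm (⇑f - P) 2 μ ≤ ENNReal.ofReal (ε/4) + ENNReal.ofReal (ε/2) := by
      have h1 : (⇑f - P) = (⇑f - g) + (g - P) := by ext x; simp
      rw [h1]
      refine le_trans (eLpNorm_add_le ((Lp.memLp f).aestronglyMeasurable.sub
        g_cont.aestronglyMeasurable) hgP_meas (by norm_num)) ?_
      apply add_le_add hfg
      refine le_trans hsplit (le_trans (add_le_add hint hext) ?_)
      rw [← ENNReal.ofReal_add (by positivity) (by positivity)]
      apply ENNReal.ofReal_le_ofReal
      linarith
    have hlt : eLpNorm (⇑f - ⇑(hP_mem.toLp P)) 2 μ ≤ ENNReal.ofReal (3*ε/4) := by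
      rw [hcongr]
      refine le_trans htotal ?_
      rw [← ENNReal.ofReal_add (by positivity) (by positivity)]
      apply ENNReal.ofReal_le_ofReal
      linarith
    calc (eLpNorm (⇑f - ⇑(hP_mem.toLp P)) 2 μ).toReal
        ≤ 3*ε/4 := ENNReal.toReal_le_of_le_ofReal (by positivity) hlt
      _ < ε := by linarith
  exact hf

/-- Jorgensen–Pedersen criterion: `{e^{2πi λ x}}_{λ∈Λ}` is an orthonormal basis of
`L²(μ)` iff `∑_{λ∈Λ} |μ̂(ξ+λ)|² = 1` for all `ξ`. -/
theorem stmt_5 (μ : Measure ℝ) [IsProbabilityMeasure μ] (Λ : Set ℝ) (hΛ : Λ.Countable) :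
    (Orthonormal ℂ (fun l : Λ => expLp μ l) ∧
      (Submodule.span ℂ (Set.range fun l : Λ => expLp μ l)).topologicalClosure = ⊤) ↔
    ∀ ξ : ℝ, ∑' l : Λ, ‖fourierT μ (ξ + (l : ℝ))‖ ^ 2 = 1 := by
  constructor
  · rintro ⟨hon, hdense⟩ ξ
    set b : HilbertBasis Λ ℂ (Lp ℂ 2 μ) := HilbertBasis.mk hon hdense.ge with hbdef
    have hb : ∀ l : Λ, b l = expLp μ l := fun l =>
      congrFun (HilbertBasis.coe_mk hon hdense.ge) l
    set x : Lp ℂ 2 μ := expLp μ (-ξ) with hx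
    have hpars := b.tsum_inner_mul_inner x x
    have hxx : ⟪x, x⟫ = 1 := by
      rw [hx, inner_expLp, sub_self, fourierT_zero]
    have hterm : ∀ l : Λ, ⟪x, b l⟫ * ⟪b l, x⟫ = ((‖fourierT μ (ξ + (l:ℝ))‖ ^ 2 : ℝ) : ℂ) := by
      intro l
      rw [hb l, ← inner_conj_symm x (expLp μ (l:ℝ)), hx, inner_expLp]
      have h1 : (l:ℝ) - (-ξ) = ξ + l := by ring
      rw [h1, Complex.conj_mul', Complex.ofReal_pow]
    rw [hxx] at hpars
    simp_rw [hterm] at hpars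
    have hsummable : Summable fun l : Λ => ‖fourierT μ (ξ + (l:ℝ))‖ ^ 2 := by
      have := hon.inner_products_summable x
      have heq : ∀ l : Λ, ‖⟪expLp μ (l:ℝ), x⟫‖ ^ 2 = ‖fourierT μ (ξ + (l:ℝ))‖ ^ 2 := by
        intro l
        rw [hx, inner_expLp]
        congr 2
        ring_nf
      exact (summable_congr heq).mp this
    have h3 : ((∑' l : Λ, ‖fourierT μ (ξ + (l:ℝ))‖ ^ 2 : ℝ) : ℂ) =
        ∑' l : Λ, ((‖fourierT μ (ξ + (l:ℝ))‖ ^ 2 : ℝ) : ℂ) := by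
      simpa using Complex.ofRealCLM.map_tsum hsummable
    rw [← h3] at hpars
    exact_mod_cast hpars
  · intro h
    have hon : Orthonormal ℂ (fun l : Λ => expLp μ l) := by
      rw [orthonormal_iff_ite]
      intro i j
      by_cases hij : i = j
      · simp [hij, inner_expLp, sub_self, fourierT_zero, norm_expLp]
      · rw [if_neg hij, inner_expLp]
        have hsum := h (-(j : ℝ))
        have hsummable : Summable (fun l : Λ => ‖fourierT μ (-(j:ℝ) + l)‖ ^ 2) := by
          by_contra hns
          rw [tsum_eq_zero_of_not_summable hns] at hsum
          norm_num at hsum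
        have hfin := Summable.sum_le_tsum ({j, i} : Finset Λ)
          (fun l _ => sq_nonneg _) hsummable
        rw [hsum, Finset.sum_pair (Ne.symm hij)] at hfin
        have hj1 : ‖fourierT μ (-(j:ℝ) + j)‖ ^ 2 = 1 := by
          rw [neg_add_cancel, fourierT_zero]
          norm_num
        rw [hj1] at hfin
        have hi0 : ‖fourierT μ (-(j:ℝ) + i)‖ ^ 2 ≤ 0 := by linarith
        have : ‖fourierT μ (-(j:ℝ) + i)‖ = 0 := by nlinarith [norm_nonneg (fourierT μ (-(j:ℝ) + i))]
        have h2 : fourierT μ (-(j:ℝ) + i) = 0 := norm_eq_zero.mp this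
        rwa [show (i:ℝ) - j = -(j:ℝ) + i by ring]
    refine ⟨hon, ?_⟩
    rw [eq_top_iff, ← dense_span_expLp μ]
    apply Submodule.topologicalClosure_minimal
    · rw [Submodule.span_le]
      rintro - ⟨η, rfl⟩
      apply mem_closure_span_of_bessel_eq hon
      have h1 : ‖expLp μ η‖ ^ 2 = 1 := by rw [norm_expLp]; norm_num
      rw [h1]
      have h2 : ∀ l : Λ, ‖⟪expLp μ (l:ℝ), expLp μ η⟫‖ ^ 2 = ‖fourierT μ (-η + l)‖ ^ 2 := by
        intro l
        rw [inner_expLp]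
        congr 2
        ring_nf
      rw [tsum_congr h2, h (-η)]
    · exact Submodule.isClosed_topologicalClosure _
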